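/- Let Λ, Λ' be g-fusion Bessel sequences in H with synthesis operators T_Λ, T_{Λ'} satisfying T_{Λ'} T_Λ* = I_H (dual pair), and Γ, Γ' g-fusion Bessel sequences in K with T_{Γ'} T_Γ* = I_K, with Bessel bounds B, D, E, F respectively. Then Λ ⊗ Γ is a g-fusion frame for H ⊗ K with lower bound 1/(DF) and upper bound BE, and similarly Λ' ⊗ Γ' is a g-fusion frame for H ⊗ K. -/

import Mathlib

/-!
On elementary tensors everything factors: `P_{V ⊗ W} (f ⊗ g) = P_V f ⊗ P_W g`, so the frame sum
of `Λ ⊗ Γ` at `f ⊗ g` is the product `‖T_Λ* f‖² ‖T_Γ* g‖²` of the two analysis sums. The upper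
bound is the product of the Bessel bounds. For the lower bound, duality gives
`‖f‖² = ⟪T_Λ* f, T_Λ'* f⟫ ≤ ‖T_Λ* f‖ ‖T_Λ'* f‖ ≤ ‖T_Λ* f‖ √D ‖f‖`, i.e. `‖f‖² / D ≤ ‖T_Λ* f‖²`.
Taking adjoints in `T_Λ' T_Λ* = I` gives `T_Λ T_Λ'* = I`, so the roles of `Λ` and `Λ'` can be
swapped.
-/

noncomputable section

open Submodule ContinuousLinearMap

local notation "⟪" x ", " y "⟫" => @inner ℂ _ _ x y

/-- An abstract realization of the Hilbert-space tensor product of `H` and `K`: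
a map `tmul : H → K → E` whose inner products multiply and whose elementary
tensors have dense span. -/
structure HilbertTensor (H K E : Type*) [NormedAddCommGroup H] [InnerProductSpace ℂ H]
    [NormedAddCommGroup K] [InnerProductSpace ℂ K]
    [NormedAddCommGroup E] [InnerProductSpace ℂ E] where
  tmul : H → K → E
  inner_tmul : ∀ (f f' : H) (g g' : K),
    ⟪tmul f g, tmul f' g'⟫ = ⟪f, f'⟫ * ⟪g, g'⟫
  dense_span : Dense (Submodule.span ℂ (Set.range fun p : H × K => tmul p.1 p.2) : Set E)

variable {H K E H' K' E' : Type*}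
variable [NormedAddCommGroup H] [InnerProductSpace ℂ H]
variable [NormedAddCommGroup K] [InnerProductSpace ℂ K]
variable [NormedAddCommGroup E] [InnerProductSpace ℂ E]
variable [NormedAddCommGroup H'] [InnerProductSpace ℂ H']
variable [NormedAddCommGroup K'] [InnerProductSpace ℂ K']
variable [NormedAddCommGroup E'] [InnerProductSpace ℂ E']

/-- The orthogonal projection onto a (closed) subspace, as an operator `H →L[ℂ] H`. -/
def projL (V : Submodule ℂ H) [HasOrthogonalProjection V] : H →L[ℂ] H :=
  V.subtypeL.comp (orthogonalProjection V)

/-- `R` is the tensor product operator `Q ⊗ T`, i.e. it is determined on elementary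
tensors by `(Q ⊗ T)(f ⊗ g) = Qf ⊗ Tg`. -/
def IsTensorOp (tp : HilbertTensor H K E) (tp' : HilbertTensor H' K' E')
    (Q : H →L[ℂ] H') (T : K →L[ℂ] K') (R : E →L[ℂ] E') : Prop :=
  ∀ (f : H) (g : K), R (tp.tmul f g) = tp'.tmul (Q f) (T g)

/-- The tensor product `V ⊗ W` of subspaces: the closure of the span of elementary
tensors of elements of `V` and `W`. -/
def tsub (tp : HilbertTensor H K E) (V : Submodule ℂ H) (W : Submodule ℂ K) : Submodule ℂ E :=
  (Submodule.span ℂ {x : E | ∃ f ∈ V, ∃ g ∈ W, x = tp.tmul f g}).topologicalClosure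

/-- `{(V i, Λ i, v i)}` is a g-fusion Bessel sequence in `H` with bound `B`. -/
def IsGFusionBessel {ι : Type*} {Hi : ι → Type*}
    [∀ i, NormedAddCommGroup (Hi i)] [∀ i, InnerProductSpace ℂ (Hi i)]
    (V : ι → Submodule ℂ H) [∀ i, HasOrthogonalProjection (V i)]
    (Λ : ∀ i, H →L[ℂ] Hi i) (v : ι → ℝ) (B : ℝ) : Prop :=
  (∀ i, 0 < v i) ∧ 0 < B ∧
    ∀ f : H, ∑' i, (v i) ^ 2 * ‖Λ i (projL (V i) f)‖ ^ 2 ≤ B * ‖f‖ ^ 2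

/-- `{(V i, Λ i, v i)}` is a g-fusion frame for `H` with bounds `A ≤ B`. -/
def IsGFusionFrame {ι : Type*} {Hi : ι → Type*}
    [∀ i, NormedAddCommGroup (Hi i)] [∀ i, InnerProductSpace ℂ (Hi i)]
    (V : ι → Submodule ℂ H) [∀ i, HasOrthogonalProjection (V i)]
    (Λ : ∀ i, H →L[ℂ] Hi i) (v : ι → ℝ) (A B : ℝ) : Prop :=
  (∀ i, 0 < v i) ∧ 0 < A ∧ A ≤ B ∧
    ∀ f : H, A * ‖f‖ ^ 2 ≤ ∑' i, (v i) ^ 2 * ‖Λ i (projL (V i) f)‖ ^ 2 ∧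
      ∑' i, (v i) ^ 2 * ‖Λ i (projL (V i) f)‖ ^ 2 ≤ B * ‖f‖ ^ 2

theorem projL_eq_starProjection (V : Submodule ℂ H) [HasOrthogonalProjection V] :
    projL V = V.starProjection :=
  rfl

theorem inner_projL_left_of_mem {V : Submodule ℂ H} [HasOrthogonalProjection V] (f : H)
    {a : H} (ha : a ∈ V) : ⟪projL V f, a⟫ = ⟪f, a⟫ := by
  rw [projL_eq_starProjection, inner_starProjection_left_eq_right,
    starProjection_eq_self_iff.mpr ha]

namespace HilbertTensor

variable (tp : HilbertTensor H K E)

theorem norm_tmul_sq (f : H) (g : K) : ‖tp.tmul f g‖ ^ 2 = ‖f‖ ^ 2 * ‖g‖ ^ 2 := by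
  have h := inner_self_eq_norm_sq (𝕜 := ℂ) (tp.tmul f g)
  rw [tp.inner_tmul, inner_self_eq_norm_sq_to_K, inner_self_eq_norm_sq_to_K] at h
  rw [← h, ← RCLike.ofReal_pow, ← RCLike.ofReal_pow, ← RCLike.ofReal_mul]
  exact RCLike.ofReal_re _

theorem tmul_sub_tmul_projL_mem_orthogonal (V : Submodule ℂ H) (W : Submodule ℂ K)
    [HasOrthogonalProjection V] [HasOrthogonalProjection W] (f : H) (g : K) :
    tp.tmul f g - tp.tmul (projL V f) (projL W g) ∈ (tsub tp V W)ᗮ := by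
  set u := tp.tmul f g - tp.tmul (projL V f) (projL W g)
  suffices tsub tp V W ≤ (innerSL ℂ u).ker from
    (Submodule.mem_orthogonal' _ _).mpr fun x hx => this hx
  refine Submodule.topologicalClosure_minimal _ ?_ (innerSL ℂ u).isClosed_ker
  rw [Submodule.span_le]
  rintro _ ⟨a, ha, b, hb, rfl⟩
  change ⟪u, tp.tmul a b⟫ = 0
  rw [inner_sub_left, tp.inner_tmul, tp.inner_tmul, inner_projL_left_of_mem f ha,
    inner_projL_left_of_mem g hb, sub_self]

theorem projL_tsub_tmul (V : Submodule ℂ H) (W : Submodule ℂ K)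
    [HasOrthogonalProjection V] [HasOrthogonalProjection W]
    [HasOrthogonalProjection (tsub tp V W)] (f : H) (g : K) :
    projL (tsub tp V W) (tp.tmul f g) = tp.tmul (projL V f) (projL W g) :=
  eq_starProjection_of_mem_orthogonal
    (Submodule.le_topologicalClosure _ (Submodule.subset_span
      ⟨_, V.starProjection_apply_mem f, _, W.starProjection_apply_mem g, rfl⟩))
    (tp.tmul_sub_tmul_projL_mem_orthogonal V W f g)

end HilbertTensor

theorem IsTensorOp.norm_projL_tsub_tmul_sq {tp : HilbertTensor H K E}
    {tp' : HilbertTensor H' K' E'} {Q : H →L[ℂ] H'} {T : K →L[ℂ] K'} {R : E →L[ℂ] E'}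
    (hR : IsTensorOp tp tp' Q T R) (V : Submodule ℂ H) (W : Submodule ℂ K)
    [HasOrthogonalProjection V] [HasOrthogonalProjection W]
    [HasOrthogonalProjection (tsub tp V W)] (f : H) (g : K) :
    ‖R (projL (tsub tp V W) (tp.tmul f g))‖ ^ 2 =
      ‖Q (projL V f)‖ ^ 2 * ‖T (projL W g)‖ ^ 2 := by
  rw [tp.projL_tsub_tmul, hR, tp'.norm_tmul_sq]

section Duality

variable {𝕜 F G : Type*} [RCLike 𝕜] [NormedAddCommGroup F] [InnerProductSpace 𝕜 F]
  [CompleteSpace F] [NormedAddCommGroup G] [InnerProductSpace 𝕜 G] [CompleteSpace G]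
  {T T' : G →L[𝕜] F}

theorem comp_adjoint_eq_id_symm (h : T'.comp (adjoint T) = ContinuousLinearMap.id 𝕜 F) :
    T.comp (adjoint T') = ContinuousLinearMap.id 𝕜 F := by
  simpa only [adjoint_comp, adjoint_adjoint, adjoint_id] using congrArg adjoint h

theorem norm_sq_le_norm_adjoint_mul_norm_adjoint
    (h : T'.comp (adjoint T) = ContinuousLinearMap.id 𝕜 F) (f : F) :
    ‖f‖ ^ 2 ≤ ‖adjoint T f‖ * ‖adjoint T' f‖ := by
  have hf : T' (adjoint T f) = f := by simpa using congrArg (· f) h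
  calc ‖f‖ ^ 2 = RCLike.re (inner 𝕜 (T' (adjoint T f)) f) := by
        rw [hf, inner_self_eq_norm_sq]
    _ = RCLike.re (inner 𝕜 (adjoint T f) (adjoint T' f)) := by
        rw [adjoint_inner_right]
    _ ≤ ‖adjoint T f‖ * ‖adjoint T' f‖ := re_inner_le_norm _ _

theorem norm_sq_le_mul_norm_adjoint_sq
    (h : T'.comp (adjoint T) = ContinuousLinearMap.id 𝕜 F) {D : ℝ}
    (hD : ∀ f, ‖adjoint T' f‖ ^ 2 ≤ D * ‖f‖ ^ 2) (f : F) :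
    ‖f‖ ^ 2 ≤ D * ‖adjoint T f‖ ^ 2 := by
  rcases eq_or_ne f 0 with rfl | hf
  · simp
  have hpos : 0 < ‖f‖ ^ 2 := by positivity
  have hle := norm_sq_le_norm_adjoint_mul_norm_adjoint h f
  have : ‖f‖ ^ 2 * ‖f‖ ^ 2 ≤ D * ‖adjoint T f‖ ^ 2 * ‖f‖ ^ 2 :=
    calc ‖f‖ ^ 2 * ‖f‖ ^ 2 ≤ ‖adjoint T f‖ ^ 2 * ‖adjoint T' f‖ ^ 2 := by
          nlinarith [mul_self_le_mul_self hpos.le hle]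
      _ ≤ ‖adjoint T f‖ ^ 2 * (D * ‖f‖ ^ 2) := by gcongr; exact hD f
      _ = D * ‖adjoint T f‖ ^ 2 * ‖f‖ ^ 2 := by ring
  exact le_of_mul_le_mul_right this hpos

end Duality

theorem lp.hasSum_norm_sq {ι : Type*} {E : ι → Type*} [∀ i, NormedAddCommGroup (E i)]
    (x : lp E 2) : HasSum (fun i => ‖x i‖ ^ 2) (‖x‖ ^ 2) := by
  simpa using lp.hasSum_norm (p := 2) (by norm_num) x

section Synthesis

variable [CompleteSpace H] {ι : Type*} {Hi : ι → Type*} [∀ i, NormedAddCommGroup (Hi i)]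
  [∀ i, InnerProductSpace ℂ (Hi i)] [∀ i, CompleteSpace (Hi i)]
  {V : ι → Submodule ℂ H} [∀ i, HasOrthogonalProjection (V i)]
  {Λ : ∀ i, H →L[ℂ] Hi i} {v : ι → ℝ} {T : lp (fun i => Hi i) 2 →L[ℂ] H}

variable (V Λ v T) in
def IsSynthesisOp : Prop :=
  ∀ x : lp (fun i => Hi i) 2, T x = ∑' i, v i • projL (V i) (adjoint (Λ i) (x i))

theorem IsSynthesisOp.apply_single [DecidableEq ι] (hT : IsSynthesisOp V Λ v T)
    (i : ι) (ξ : Hi i) : T (lp.single 2 i ξ) = v i • projL (V i) (adjoint (Λ i) ξ) := by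
  rw [hT, tsum_eq_single i fun j hj => by rw [lp.single_apply_ne 2 i ξ hj]; simp,
    lp.single_apply_self]

theorem IsSynthesisOp.adjoint_apply (hT : IsSynthesisOp V Λ v T) (f : H) (i : ι) :
    adjoint T f i = v i • Λ i (projL (V i) f) := by
  classical
  refine ext_inner_right ℂ fun ξ => ?_
  rw [← lp.inner_single_right, adjoint_inner_left, hT.apply_single,
    RCLike.real_smul_eq_coe_smul (K := ℂ), RCLike.real_smul_eq_coe_smul (K := ℂ),
    inner_smul_right, inner_smul_left, RCLike.conj_ofReal, projL_eq_starProjection,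
    ← inner_starProjection_left_eq_right, adjoint_inner_right]

theorem IsSynthesisOp.hasSum_norm_sq_adjoint (hT : IsSynthesisOp V Λ v T) (f : H) :
    HasSum (fun i => v i ^ 2 * ‖Λ i (projL (V i) f)‖ ^ 2) (‖adjoint T f‖ ^ 2) := by
  simpa only [hT.adjoint_apply, norm_smul, mul_pow, Real.norm_eq_abs, sq_abs]
    using lp.hasSum_norm_sq (adjoint T f)

theorem IsGFusionBessel.norm_adjoint_sq_le {B : ℝ} (hΛ : IsGFusionBessel V Λ v B)
    (hT : IsSynthesisOp V Λ v T) (f : H) : ‖adjoint T f‖ ^ 2 ≤ B * ‖f‖ ^ 2 :=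
  (hT.hasSum_norm_sq_adjoint f).tsum_eq ▸ hΛ.2.2 f

theorem IsGFusionBessel.norm_sq_div_le_norm_adjoint_sq {D : ℝ} (hΛ : IsGFusionBessel V Λ v D)
    (hT : IsSynthesisOp V Λ v T) {S : lp (fun i => Hi i) 2 →L[ℂ] H}
    (hdual : T.comp (adjoint S) = ContinuousLinearMap.id ℂ H) (f : H) :
    ‖f‖ ^ 2 / D ≤ ‖adjoint S f‖ ^ 2 :=
  (div_le_iff₀' hΛ.2.1).mpr (norm_sq_le_mul_norm_adjoint_sq hdual (hΛ.norm_adjoint_sq_le hT) f)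

end Synthesis

section TensorProduct

variable [CompleteSpace H] [CompleteSpace K] {ι κ : Type*}
  {Hi : ι → Type*} [∀ i, NormedAddCommGroup (Hi i)] [∀ i, InnerProductSpace ℂ (Hi i)]
  [∀ i, CompleteSpace (Hi i)]
  {Kj : κ → Type*} [∀ j, NormedAddCommGroup (Kj j)] [∀ j, InnerProductSpace ℂ (Kj j)]
  [∀ j, CompleteSpace (Kj j)]
  {Eij : ι → κ → Type*} [∀ i j, NormedAddCommGroup (Eij i j)]
  [∀ i j, InnerProductSpace ℂ (Eij i j)]
  {tp : HilbertTensor H K E} {tpij : ∀ i j, HilbertTensor (Hi i) (Kj j) (Eij i j)}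
  {V V' : ι → Submodule ℂ H} [∀ i, HasOrthogonalProjection (V i)]
  [∀ i, HasOrthogonalProjection (V' i)]
  {W W' : κ → Submodule ℂ K} [∀ j, HasOrthogonalProjection (W j)]
  [∀ j, HasOrthogonalProjection (W' j)]
  [∀ i j, HasOrthogonalProjection (tsub tp (V i) (W j))]
  {Λ Λ' : ∀ i, H →L[ℂ] Hi i} {Γ Γ' : ∀ j, K →L[ℂ] Kj j} {v v' : ι → ℝ} {w w' : κ → ℝ}
  {TΛ TΛ' : lp (fun i => Hi i) 2 →L[ℂ] H} {TΓ TΓ' : lp (fun j => Kj j) 2 →L[ℂ] K}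
  {R : ∀ i j, E →L[ℂ] Eij i j}

theorem IsSynthesisOp.hasSum_tensor (hTΛ : IsSynthesisOp V Λ v TΛ)
    (hTΓ : IsSynthesisOp W Γ w TΓ) (hR : ∀ i j, IsTensorOp tp (tpij i j) (Λ i) (Γ j) (R i j))
    (f : H) (g : K) :
    HasSum (fun p : ι × κ => (v p.1 * w p.2) ^ 2 *
        ‖R p.1 p.2 (projL (tsub tp (V p.1) (W p.2)) (tp.tmul f g))‖ ^ 2)
      (‖adjoint TΛ f‖ ^ 2 * ‖adjoint TΓ g‖ ^ 2) := by
  have hf := hTΛ.hasSum_norm_sq_adjoint f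
  have hg := hTΓ.hasSum_norm_sq_adjoint g
  have hprod := hf.mul hg <|
    hf.summable.mul_of_nonneg hg.summable (fun _ => by positivity) fun _ => by positivity
  simp_rw [(hR _ _).norm_projL_tsub_tmul_sq, mul_pow]
  simpa only [mul_mul_mul_comm] using hprod

theorem tensor_frame_bounds_of_dual {B₀ D₀ E₀ F₀ : ℝ}
    (hΛ : IsGFusionBessel V Λ v B₀) (hΛ' : IsGFusionBessel V' Λ' v' D₀)
    (hΓ : IsGFusionBessel W Γ w E₀) (hΓ' : IsGFusionBessel W' Γ' w' F₀)
    (hTΛ : IsSynthesisOp V Λ v TΛ) (hTΛ' : IsSynthesisOp V' Λ' v' TΛ')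
    (hTΓ : IsSynthesisOp W Γ w TΓ) (hTΓ' : IsSynthesisOp W' Γ' w' TΓ')
    (hdualΛ : TΛ'.comp (adjoint TΛ) = ContinuousLinearMap.id ℂ H)
    (hdualΓ : TΓ'.comp (adjoint TΓ) = ContinuousLinearMap.id ℂ K)
    (hR : ∀ i j, IsTensorOp tp (tpij i j) (Λ i) (Γ j) (R i j)) (f : H) (g : K) :
    1 / (D₀ * F₀) * ‖tp.tmul f g‖ ^ 2 ≤
        ∑' p : ι × κ, (v p.1 * w p.2) ^ 2 *
          ‖R p.1 p.2 (projL (tsub tp (V p.1) (W p.2)) (tp.tmul f g))‖ ^ 2 ∧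
      ∑' p : ι × κ, (v p.1 * w p.2) ^ 2 *
          ‖R p.1 p.2 (projL (tsub tp (V p.1) (W p.2)) (tp.tmul f g))‖ ^ 2 ≤
        B₀ * E₀ * ‖tp.tmul f g‖ ^ 2 := by
  have hf₁ := hΛ'.norm_sq_div_le_norm_adjoint_sq hTΛ' hdualΛ f
  have hg₁ := hΓ'.norm_sq_div_le_norm_adjoint_sq hTΓ' hdualΓ g
  have hf₂ := hΛ.norm_adjoint_sq_le hTΛ f
  have hg₂ := hΓ.norm_adjoint_sq_le hTΓ g
  rw [(hTΛ.hasSum_tensor hTΓ hR f g).tsum_eq, tp.norm_tmul_sq]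
  constructor
  · calc 1 / (D₀ * F₀) * (‖f‖ ^ 2 * ‖g‖ ^ 2) = ‖f‖ ^ 2 / D₀ * (‖g‖ ^ 2 / F₀) := by ring
      _ ≤ _ := mul_le_mul hf₁ hg₁ (div_nonneg (sq_nonneg _) hΓ'.2.1.le) (sq_nonneg _)
  · calc _ ≤ B₀ * ‖f‖ ^ 2 * (E₀ * ‖g‖ ^ 2) :=
          mul_le_mul hf₂ hg₂ (sq_nonneg _) (mul_nonneg hΛ.2.1.le (sq_nonneg _))
      _ = B₀ * E₀ * (‖f‖ ^ 2 * ‖g‖ ^ 2) := by ring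

end TensorProduct

theorem stmt_16_general {ι κ : Type*} [CompleteSpace H] [CompleteSpace K]
    {Hi : ι → Type*} [∀ i, NormedAddCommGroup (Hi i)] [∀ i, InnerProductSpace ℂ (Hi i)]
    [∀ i, CompleteSpace (Hi i)]
    {Kj : κ → Type*} [∀ j, NormedAddCommGroup (Kj j)] [∀ j, InnerProductSpace ℂ (Kj j)]
    [∀ j, CompleteSpace (Kj j)]
    {Eij : ι → κ → Type*} [∀ i j, NormedAddCommGroup (Eij i j)]
    [∀ i j, InnerProductSpace ℂ (Eij i j)]
    (tp : HilbertTensor H K E) (tpij : ∀ i j, HilbertTensor (Hi i) (Kj j) (Eij i j))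
    (V V' : ι → Submodule ℂ H) [∀ i, HasOrthogonalProjection (V i)]
    [∀ i, HasOrthogonalProjection (V' i)]
    (W W' : κ → Submodule ℂ K) [∀ j, HasOrthogonalProjection (W j)]
    [∀ j, HasOrthogonalProjection (W' j)]
    [∀ i j, HasOrthogonalProjection (tsub tp (V i) (W j))]
    [∀ i j, HasOrthogonalProjection (tsub tp (V' i) (W' j))]
    (Λ Λ' : ∀ i, H →L[ℂ] Hi i) (Γ Γ' : ∀ j, K →L[ℂ] Kj j)
    (v v' : ι → ℝ) (w w' : κ → ℝ) (B₀ D₀ E₀ F₀ : ℝ)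
    (hΛ : IsGFusionBessel V Λ v B₀) (hΛ' : IsGFusionBessel V' Λ' v' D₀)
    (hΓ : IsGFusionBessel W Γ w E₀) (hΓ' : IsGFusionBessel W' Γ' w' F₀)
    (TΛ TΛ' : lp (fun i => Hi i) 2 →L[ℂ] H) (TΓ TΓ' : lp (fun j => Kj j) 2 →L[ℂ] K)
    (hTΛ : ∀ x : lp (fun i => Hi i) 2,
      TΛ x = ∑' i, v i • projL (V i) (ContinuousLinearMap.adjoint (Λ i) (x i)))
    (hTΛ' : ∀ x : lp (fun i => Hi i) 2,
      TΛ' x = ∑' i, v' i • projL (V' i) (ContinuousLinearMap.adjoint (Λ' i) (x i)))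
    (hTΓ : ∀ y : lp (fun j => Kj j) 2,
      TΓ y = ∑' j, w j • projL (W j) (ContinuousLinearMap.adjoint (Γ j) (y j)))
    (hTΓ' : ∀ y : lp (fun j => Kj j) 2,
      TΓ' y = ∑' j, w' j • projL (W' j) (ContinuousLinearMap.adjoint (Γ' j) (y j)))
    (hdual1 : TΛ'.comp (ContinuousLinearMap.adjoint TΛ) = ContinuousLinearMap.id ℂ H)
    (hdual2 : TΓ'.comp (ContinuousLinearMap.adjoint TΓ) = ContinuousLinearMap.id ℂ K)
    (Rij R'ij : ∀ i j, E →L[ℂ] Eij i j)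
    (hRij : ∀ i j, IsTensorOp tp (tpij i j) (Λ i) (Γ j) (Rij i j))
    (hR'ij : ∀ i j, IsTensorOp tp (tpij i j) (Λ' i) (Γ' j) (R'ij i j)) :
    (∀ (f : H) (g : K),
      1 / (D₀ * F₀) * ‖tp.tmul f g‖ ^ 2 ≤
        ∑' p : ι × κ, (v p.1 * w p.2) ^ 2 *
          ‖Rij p.1 p.2 (projL (tsub tp (V p.1) (W p.2)) (tp.tmul f g))‖ ^ 2 ∧
      ∑' p : ι × κ, (v p.1 * w p.2) ^ 2 *
          ‖Rij p.1 p.2 (projL (tsub tp (V p.1) (W p.2)) (tp.tmul f g))‖ ^ 2 ≤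
        B₀ * E₀ * ‖tp.tmul f g‖ ^ 2) ∧
    (∀ (f : H) (g : K),
      1 / (B₀ * E₀) * ‖tp.tmul f g‖ ^ 2 ≤
        ∑' p : ι × κ, (v' p.1 * w' p.2) ^ 2 *
          ‖R'ij p.1 p.2 (projL (tsub tp (V' p.1) (W' p.2)) (tp.tmul f g))‖ ^ 2 ∧
      ∑' p : ι × κ, (v' p.1 * w' p.2) ^ 2 *
          ‖R'ij p.1 p.2 (projL (tsub tp (V' p.1) (W' p.2)) (tp.tmul f g))‖ ^ 2 ≤
        D₀ * F₀ * ‖tp.tmul f g‖ ^ 2) := by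
  exact ⟨tensor_frame_bounds_of_dual hΛ hΛ' hΓ hΓ' hTΛ hTΛ' hTΓ hTΓ' hdual1 hdual2 hRij,
    tensor_frame_bounds_of_dual hΛ' hΛ hΓ' hΓ hTΛ' hTΛ hTΓ' hTΓ
      (comp_adjoint_eq_id_symm hdual1) (comp_adjoint_eq_id_symm hdual2) hR'ij⟩

/-- if `(Λ, Λ')` and `(Γ, Γ')` are dual pairs of g-fusion Bessel
sequences (`T_{Λ'} T_Λ* = I_H`, `T_{Γ'} T_Γ* = I_K`) with Bessel bounds
`B₀, D₀, E₀, F₀`, then `Λ ⊗ Γ` is a g-fusion frame for `H ⊗ K` with bounds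
`1/(D₀F₀)` and `B₀E₀`, and similarly `Λ' ⊗ Γ'` is a g-fusion frame for `H ⊗ K`. -/
theorem stmt_16 {ι κ : Type*} [CompleteSpace H] [CompleteSpace K] [CompleteSpace E]
    {Hi : ι → Type*} [∀ i, NormedAddCommGroup (Hi i)] [∀ i, InnerProductSpace ℂ (Hi i)]
    [∀ i, CompleteSpace (Hi i)]
    {Kj : κ → Type*} [∀ j, NormedAddCommGroup (Kj j)] [∀ j, InnerProductSpace ℂ (Kj j)]
    [∀ j, CompleteSpace (Kj j)]
    {Eij : ι → κ → Type*} [∀ i j, NormedAddCommGroup (Eij i j)]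
    [∀ i j, InnerProductSpace ℂ (Eij i j)] [∀ i j, CompleteSpace (Eij i j)]
    (tp : HilbertTensor H K E) (tpij : ∀ i j, HilbertTensor (Hi i) (Kj j) (Eij i j))
    (V V' : ι → Submodule ℂ H) [∀ i, HasOrthogonalProjection (V i)]
    [∀ i, HasOrthogonalProjection (V' i)]
    (W W' : κ → Submodule ℂ K) [∀ j, HasOrthogonalProjection (W j)]
    [∀ j, HasOrthogonalProjection (W' j)]
    [∀ i j, HasOrthogonalProjection (tsub tp (V i) (W j))]
    [∀ i j, HasOrthogonalProjection (tsub tp (V' i) (W' j))]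
    (Λ Λ' : ∀ i, H →L[ℂ] Hi i) (Γ Γ' : ∀ j, K →L[ℂ] Kj j)
    (v v' : ι → ℝ) (w w' : κ → ℝ) (B₀ D₀ E₀ F₀ : ℝ)
    (hΛ : IsGFusionBessel V Λ v B₀) (hΛ' : IsGFusionBessel V' Λ' v' D₀)
    (hΓ : IsGFusionBessel W Γ w E₀) (hΓ' : IsGFusionBessel W' Γ' w' F₀)
    (TΛ TΛ' : lp (fun i => Hi i) 2 →L[ℂ] H) (TΓ TΓ' : lp (fun j => Kj j) 2 →L[ℂ] K)
    (hTΛ : ∀ x : lp (fun i => Hi i) 2,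
      TΛ x = ∑' i, v i • projL (V i) (ContinuousLinearMap.adjoint (Λ i) (x i)))
    (hTΛ' : ∀ x : lp (fun i => Hi i) 2,
      TΛ' x = ∑' i, v' i • projL (V' i) (ContinuousLinearMap.adjoint (Λ' i) (x i)))
    (hTΓ : ∀ y : lp (fun j => Kj j) 2,
      TΓ y = ∑' j, w j • projL (W j) (ContinuousLinearMap.adjoint (Γ j) (y j)))
    (hTΓ' : ∀ y : lp (fun j => Kj j) 2,
      TΓ' y = ∑' j, w' j • projL (W' j) (ContinuousLinearMap.adjoint (Γ' j) (y j)))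
    (hdual1 : TΛ'.comp (ContinuousLinearMap.adjoint TΛ) = ContinuousLinearMap.id ℂ H)
    (hdual2 : TΓ'.comp (ContinuousLinearMap.adjoint TΓ) = ContinuousLinearMap.id ℂ K)
    (Rij R'ij : ∀ i j, E →L[ℂ] Eij i j)
    (hRij : ∀ i j, IsTensorOp tp (tpij i j) (Λ i) (Γ j) (Rij i j))
    (hR'ij : ∀ i j, IsTensorOp tp (tpij i j) (Λ' i) (Γ' j) (R'ij i j)) :
    (∀ (f : H) (g : K),
      1 / (D₀ * F₀) * ‖tp.tmul f g‖ ^ 2 ≤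
        ∑' p : ι × κ, (v p.1 * w p.2) ^ 2 *
          ‖Rij p.1 p.2 (projL (tsub tp (V p.1) (W p.2)) (tp.tmul f g))‖ ^ 2 ∧
      ∑' p : ι × κ, (v p.1 * w p.2) ^ 2 *
          ‖Rij p.1 p.2 (projL (tsub tp (V p.1) (W p.2)) (tp.tmul f g))‖ ^ 2 ≤
        B₀ * E₀ * ‖tp.tmul f g‖ ^ 2) ∧
    (∀ (f : H) (g : K),
      1 / (B₀ * E₀) * ‖tp.tmul f g‖ ^ 2 ≤
        ∑' p : ι × κ, (v' p.1 * w' p.2) ^ 2 *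
          ‖R'ij p.1 p.2 (projL (tsub tp (V' p.1) (W' p.2)) (tp.tmul f g))‖ ^ 2 ∧
      ∑' p : ι × κ, (v' p.1 * w' p.2) ^ 2 *
          ‖R'ij p.1 p.2 (projL (tsub tp (V' p.1) (W' p.2)) (tp.tmul f g))‖ ^ 2 ≤
        D₀ * F₀ * ‖tp.tmul f g‖ ^ 2) :=
  stmt_16_general tp tpij V V' W W' Λ Λ' Γ Γ' v v' w w' B₀ D₀ E₀ F₀ hΛ hΛ' hΓ hΓ' TΛ TΛ' TΓ TΓ' hTΛ
    hTΛ' hTΓ hTΓ' hdual1 hdual2 Rij R'ij hRij hR'ij
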